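/- Let T : X ⇉ X* be a maximal monotone operator. The following are equivalent: (1) D(T) is bounded; (2) for every h ∈ F_T, P₁(D(h)) is bounded; (3) there exists h ∈ F_T such that P₁(D(h)) is bounded; (4) there exists 0 ≤ L < ∞ such that for every h ∈ F_T which is lower semicontinuous for the strong×weak-* topology on X × X* and every x ∈ P₁(D(h)), the function x* ↦ h(x,x*) is real-valued and |h(x,x*) − h(x,z*)| ≤ L‖x* − z*‖ for all x*, z* ∈ X*; (5) there exist h ∈ F_T lower semicontinuous for the strong×weak-* topology and 0 ≤ L < ∞ such that for every x ∈ P₁(D(h)), the function x* ↦ h(x,x*) is real-valued and |h(x,x*) − h(x,z*)| ≤ L‖x* − z*‖ for all x*, z* ∈ X*. -/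

import Mathlib

open NormedSpace Classical

noncomputable section

/-- effective domain of an extended-real-valued function -/
def edom {E : Type*} (f : E → EReal) : Set E := {x | f x < ⊤}

/-- indicator function (0 on the set, +∞ off it) -/
def indic {E : Type*} (C : Set E) : E → EReal := fun x => if x ∈ C then 0 else ⊤

/-- convexity for EReal-valued functions -/
def ErConvex {E : Type*} [AddCommGroup E] [Module ℝ E] (f : E → EReal) : Prop :=
  ∀ x y : E, ∀ a b : ℝ, 0 ≤ a → 0 ≤ b → a + b = 1 →
    f (a • x + b • y) ≤ (a : EReal) * f x + (b : EReal) * f y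

/-- recession cone of a set -/
def recc {E : Type*} [AddCommGroup E] [Module ℝ E] (C : Set E) : Set E :=
  {u | ∀ z ∈ C, ∀ t : ℝ, 0 ≤ t → z + t • u ∈ C}

variable (X : Type*) [NormedAddCommGroup X] [NormedSpace ℝ X]

/-- Fenchel conjugate of f : X → EReal, defined on the dual -/
def conj1 (f : X → EReal) : StrongDual ℝ X → EReal :=
  fun p => ⨆ x : X, ((p x : EReal) - f x)

/-- Fenchel conjugate of h : X × X* → EReal, defined on X* × X** via
⟨(x,x*),(y*,y**)⟩ = ⟨x,y*⟩ + ⟨y**,x*⟩ -/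
def conj2 (h : X × StrongDual ℝ X → EReal) : StrongDual ℝ X × StrongDual ℝ (StrongDual ℝ X) → EReal :=
  fun p => ⨆ z : X × StrongDual ℝ X, (((p.1 z.1 + p.2 z.2 : ℝ) : EReal) - h z)

/-- The J operation: (Jh)(x,x*) = h*(x*, x), with X canonically embedded in X** -/
def Jop (h : X × StrongDual ℝ X → EReal) : X × StrongDual ℝ X → EReal :=
  fun z => conj2 X h (z.2, inclusionInDoubleDual ℝ X z.1)

/-- the duality product as an EReal-valued function on X × X* -/
def pairE : X × StrongDual ℝ X → EReal := fun z => ((z.2 z.1 : ℝ) : EReal)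

/-- weak-* closure of a subset of the dual -/
def wcl (S : Set (StrongDual ℝ X)) : Set (StrongDual ℝ X) :=
  StrongDual.toWeakDual ⁻¹' closure (StrongDual.toWeakDual '' S)

/-- monotone subset of X × X* -/
def MonotoneSet (T : Set (X × StrongDual ℝ X)) : Prop :=
  ∀ p ∈ T, ∀ q ∈ T, 0 ≤ (p.2 - q.2) (p.1 - q.1)

/-- maximal monotone subset of X × X* -/
def MaxMonotone (T : Set (X × StrongDual ℝ X)) : Prop :=
  MonotoneSet X T ∧ ∀ S : Set (X × StrongDual ℝ X), MonotoneSet X S → T ⊆ S → S = T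

/-- the Fitzpatrick family of a maximal monotone operator: closed convex functions
majorizing the duality product and coinciding with it on T -/
def FitzFamily (T : Set (X × StrongDual ℝ X)) : Set ((X × StrongDual ℝ X) → EReal) :=
  {h | ErConvex h ∧ LowerSemicontinuous h ∧ (∀ z, pairE X z ≤ h z) ∧
       ∀ z ∈ T, h z = pairE X z}

/-- lower semicontinuity with respect to the strong × weak-* topology on X × X* -/
def lscSW (h : X × StrongDual ℝ X → EReal) : Prop :=
  LowerSemicontinuous (fun p : X × WeakDual ℝ X => h (p.1, StrongDual.toWeakDual.symm p.2))

end

/-!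
The Fitzpatrick function `φ_T (x, x*) = sup_{(a, a*) ∈ T} ⟨x, a*⟩ + ⟨a, x*⟩ - ⟨a, a*⟩` lies in `F_T`
and is strong × weak-* lower semicontinuous. If `D(T)` lies in the ball of radius `L` and
`φ_T (v, g) < ∞`, then `‖v‖ ≤ L`: otherwise adding to `g` a large multiple of a norming functional
of `v` yields a point monotonically related to `T`, contradicting maximality. Every `h ∈ F_T`
satisfies `φ_T ≤ 2 h - ⟨·, ·⟩`, and every continuous affine minorant `⟨x, g⟩ + ⟨v, x*⟩ + c` of `h`
has `φ_T (v, g) ≤ -c`. The first fact bounds `P₁ D(h)`; the second makes each `h (x, ·)`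
`L`-Lipschitz, because a strong × weak-* lower semicontinuous convex `h` is the supremum of such
minorants. Conversely, if `h (x, ·)` is `L`-Lipschitz where `(x, x*) ∈ T`, then
`⟨x, y*⟩ ≤ h (x, x* + y*) - h (x, x*) ≤ L ‖y*‖` for all `y*`, so `‖x‖ ≤ L`.
-/

section ConvexAnalysis

variable {E : Type*} [AddCommGroup E] [Module ℝ E]

theorem erConvex_iSup {ι : Type*} (g : ι → E → ℝ)
    (hg : ∀ i x y (a b : ℝ), a + b = 1 → g i (a • x + b • y) = a * g i x + b * g i y) :
    ErConvex fun z => ⨆ i, (g i z : EReal) := by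
  intro x y a b ha hb hab
  refine iSup_le fun i => ?_
  rw [hg i x y a b hab, EReal.coe_add, EReal.coe_mul, EReal.coe_mul]
  gcongr
  · exact le_iSup (fun i => (g i x : EReal)) i
  · exact le_iSup (fun i => (g i y : EReal)) i

theorem ErConvex.comp_linearMap {E' : Type*} [AddCommGroup E'] [Module ℝ E'] {f : E → EReal}
    (hf : ErConvex f) (e : E' →ₗ[ℝ] E) : ErConvex (f ∘ e) := by
  intro x y a b ha hb hab
  simpa only [Function.comp_apply, map_add, map_smul] using hf (e x) (e y) a b ha hb hab

theorem ErConvex.convex_epigraph {f : E → EReal} (hf : ErConvex f) :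
    Convex ℝ {q : E × ℝ | f q.1 ≤ q.2} := by
  rintro ⟨x, s⟩ (hx : f x ≤ s) ⟨y, t⟩ (hy : f y ≤ t) a b ha hb hab
  calc f (a • x + b • y) ≤ (a : EReal) * f x + (b : EReal) * f y := hf x y a b ha hb hab
    _ ≤ (a : EReal) * s + (b : EReal) * t := by gcongr
    _ = ((a • (x, s) + b • (y, t) : E × ℝ).2 : EReal) := by simp

theorem LowerSemicontinuous.isClosed_real_epigraph {F : Type*} [TopologicalSpace F]
    {f : F → EReal} (hf : LowerSemicontinuous f) : IsClosed {q : F × ℝ | f q.1 ≤ q.2} :=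
  hf.isClosed_epigraph.preimage (continuous_id.prodMap continuous_coe_real_ereal)

variable [TopologicalSpace E]

def IsAffineMinorant (f : E → EReal) (g : E →L[ℝ] ℝ) (c : ℝ) : Prop :=
  ∀ z, ((g z + c : ℝ) : EReal) ≤ f z

variable {f : E → EReal}

theorem separation_slope_nonneg {g : E →L[ℝ] ℝ} {s u : ℝ}
    (hsep : ∀ z (r : ℝ), f z ≤ r → u < g z + r * s) {x₀ : E} (hx₀ : f x₀ ≠ ⊤) : 0 ≤ s := by
  by_contra! hs
  set r := max (f x₀).toReal ((u - g x₀) / s)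
  have hr : r * s ≤ u - g x₀ := (div_le_iff_of_neg hs).1 (le_max_right _ _)
  linarith [hsep x₀ r ((EReal.le_coe_toReal hx₀).trans (by exact_mod_cast le_max_left _ _))]

theorem isAffineMinorant_of_separation (hbot : ∀ z, f z ≠ ⊥) {g : E →L[ℝ] ℝ} {s u : ℝ}
    (hs : 0 < s) (hsep : ∀ z (r : ℝ), f z ≤ r → u < g z + r * s) :
    IsAffineMinorant f (-s⁻¹ • g) (s⁻¹ * u) := by
  intro z
  by_cases hz : f z = ⊤
  · simp [hz]
  rw [← EReal.coe_toReal hz (hbot z), EReal.coe_le_coe_iff]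
  have := hsep z _ (EReal.le_coe_toReal hz)
  have key : (-s⁻¹ • g) z + s⁻¹ * u = (u - g z) / s := by
    simp only [smul_apply, smul_eq_mul]; field_simp; ring
  rw [key, div_le_iff₀ hs]
  linarith

theorem separation_minorant_gt {g : E →L[ℝ] ℝ} {s u t : ℝ} (hs : 0 < s) {x : E}
    (hxt : g x + t * s < u) : t < (-s⁻¹ • g) x + s⁻¹ * u := by
  have key : (-s⁻¹ • g) x + s⁻¹ * u = (u - g x) / s := by
    simp only [smul_apply, smul_eq_mul]; field_simp; ring
  rw [key, lt_div_iff₀ hs]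
  linarith

theorem IsAffineMinorant.sub_smul {g₀ g : E →L[ℝ] ℝ} {c₀ u k : ℝ}
    (h₀ : IsAffineMinorant f g₀ c₀) (hg : ∀ z, f z ≠ ⊤ → u < g z) (hk : 0 ≤ k) :
    IsAffineMinorant f (g₀ - k • g) (c₀ + k * u) := by
  intro z
  by_cases hz : f z = ⊤
  · simp [hz]
  refine le_trans ?_ (h₀ z)
  have := mul_le_mul_of_nonneg_left (hg z hz).le hk
  simp only [sub_apply, smul_apply, smul_eq_mul]
  exact_mod_cast (by linarith)

variable [IsTopologicalAddGroup E] [ContinuousSMul ℝ E] [LocallyConvexSpace ℝ E]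

theorem exists_separation_of_lt (hcv : ErConvex f) (hlsc : LowerSemicontinuous f) {x : E}
    {t : ℝ} (ht : (t : EReal) < f x) :
    ∃ (g : E →L[ℝ] ℝ) (s u : ℝ), g x + t * s < u ∧ ∀ z (r : ℝ), f z ≤ r → u < g z + r * s := by
  obtain ⟨F, u, hFx, hF⟩ := geometric_hahn_banach_point_closed hcv.convex_epigraph
    hlsc.isClosed_real_epigraph (show (x, t) ∉ {q : E × ℝ | f q.1 ≤ q.2} from not_le.2 ht)
  have hdecomp : ∀ z r, F (z, r) = F.comp (.inl ℝ E ℝ) z + r * F (0, 1) := fun z r => by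
    rw [show ((z, r) : E × ℝ) = (z, 0) + r • (0, 1) by simp, map_add, map_smul, smul_eq_mul]
    rfl
  refine ⟨F.comp (.inl ℝ E ℝ), F (0, 1), u, ?_, fun z r hzr => ?_⟩
  · rw [← hdecomp]; exact hFx
  · rw [← hdecomp]; exact hF (z, r) hzr

theorem exists_isAffineMinorant_gt_of_ne_top (hcv : ErConvex f) (hlsc : LowerSemicontinuous f)
    (hbot : ∀ z, f z ≠ ⊥) {x : E} (hx : f x ≠ ⊤) {t : ℝ} (ht : (t : EReal) < f x) :
    ∃ g c, IsAffineMinorant f g c ∧ t < g x + c := by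
  obtain ⟨g, s, u, hxt, hsep⟩ := exists_separation_of_lt hcv hlsc ht
  have hxr := hsep x _ (EReal.le_coe_toReal hx)
  have htr : t < (f x).toReal := by
    rwa [← EReal.coe_lt_coe_iff, EReal.coe_toReal hx (hbot x)]
  have hs : 0 < s := by nlinarith
  exact ⟨_, _, isAffineMinorant_of_separation hbot hs hsep, separation_minorant_gt hs hxt⟩

theorem exists_isAffineMinorant_gt (hcv : ErConvex f) (hlsc : LowerSemicontinuous f)
    (hbot : ∀ z, f z ≠ ⊥) {x₀ : E} (hx₀ : f x₀ ≠ ⊤) (x : E) {t : ℝ} (ht : (t : EReal) < f x) :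
    ∃ g c, IsAffineMinorant f g c ∧ t < g x + c := by
  obtain ⟨g, s, u, hxt, hsep⟩ := exists_separation_of_lt hcv hlsc ht
  rcases (separation_slope_nonneg hsep hx₀).lt_or_eq with hs | rfl
  · exact ⟨_, _, isAffineMinorant_of_separation hbot hs hsep, separation_minorant_gt hs hxt⟩
  -- the hyperplane is vertical: tilt a nonvertical minorant by a large multiple of it
  have hgx : g x < u := by simpa using hxt
  have hdom : ∀ z, f z ≠ ⊤ → u < g z := fun z hz => by
    simpa using hsep z _ (EReal.le_coe_toReal hz)
  obtain ⟨g₀, c₀, h₀, -⟩ := exists_isAffineMinorant_gt_of_ne_top hcv hlsc hbot hx₀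
    (t := (f x₀).toReal - 1) (by
      rw [← EReal.coe_toReal hx₀ (hbot x₀), EReal.coe_lt_coe_iff, EReal.toReal_coe]; linarith)
  set k := max 0 ((t - g₀ x - c₀ + 1) / (u - g x))
  have hk : t - g₀ x - c₀ + 1 ≤ k * (u - g x) :=
    (div_le_iff₀ (sub_pos.2 hgx)).1 (le_max_right _ _)
  refine ⟨_, _, h₀.sub_smul (k := k) hdom (le_max_left _ _), ?_⟩
  simp only [sub_apply, smul_apply, smul_eq_mul]
  linarith

end ConvexAnalysis

section WeakDualProduct

variable {X : Type*} [NormedAddCommGroup X] [NormedSpace ℝ X]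

instance : LocallyConvexSpace ℝ (WeakDual ℝ X) := WeakBilin.locallyConvexSpace

theorem exists_eq_apply_fst_add_apply_snd (φ : (X × WeakDual ℝ X) →L[ℝ] ℝ) :
    ∃ (g : StrongDual ℝ X) (v : X), ∀ p, φ p = g p.1 + p.2 v := by
  obtain ⟨v, hv⟩ :=
    LinearMap.dualEmbedding_surjective (topDualPairing ℝ X) (φ.comp (.inr ℝ X (WeakDual ℝ X)))
  refine ⟨φ.comp (.inl ℝ X (WeakDual ℝ X)), v, fun p => ?_⟩
  conv_lhs => rw [← φ.coprod_comp_inl_inr]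
  rw [ContinuousLinearMap.coprod_apply]
  exact congrArg _ (DFunLike.congr_fun hv p.2).symm

/-- By `exists_eq_apply_fst_add_apply_snd`, `h` is the supremum of affine minorants
`(x, x*) ↦ ⟨x, g⟩ + ⟨v, x*⟩ + c`, each of which is `‖v‖`-Lipschitz in `x*`. -/
theorem apply_le_add_mul_norm_of_minorant_slopes_le {h : X × StrongDual ℝ X → EReal}
    (hcv : ErConvex h) (hlsc : lscSW X h) (hbot : ∀ z, h z ≠ ⊥) {L : ℝ}
    (hL : ∀ (g : StrongDual ℝ X) (v : X) (c : ℝ),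
      (∀ z, ((g z.1 + z.2 v + c : ℝ) : EReal) ≤ h z) → ‖v‖ ≤ L)
    {x : X} {y₀ : StrongDual ℝ X} (hy₀ : h (x, y₀) ≠ ⊤) (y : StrongDual ℝ X) :
    h (x, y) ≤ ((h (x, y₀)).toReal + L * ‖y - y₀‖ : ℝ) := by
  by_contra! hgt
  let e : X × WeakDual ℝ X →ₗ[ℝ] X × StrongDual ℝ X :=
    LinearMap.id.prodMap StrongDual.toWeakDual.symm.toLinearMap
  obtain ⟨φ, c, hφ, hφy⟩ := exists_isAffineMinorant_gt (hcv.comp_linearMap e) hlsc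
    (fun _ => hbot _) (x₀ := (x, StrongDual.toWeakDual y₀)) hy₀ (x, StrongDual.toWeakDual y) hgt
  obtain ⟨g, v, hgv⟩ := exists_eq_apply_fst_add_apply_snd φ
  have hminorant : ∀ z, ((g z.1 + z.2 v + c : ℝ) : EReal) ≤ h z := fun z => by
    have := hφ (z.1, StrongDual.toWeakDual z.2)
    rw [hgv] at this
    exact this
  have hy₀' : g x + y₀ v + c ≤ (h (x, y₀)).toReal := by
    have := hminorant (x, y₀)
    rwa [← EReal.coe_toReal hy₀ (hbot _), EReal.coe_le_coe_iff] at this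
  have hv : ‖v‖ ≤ L := hL g v c hminorant
  have hslope : (y - y₀) v ≤ L * ‖y - y₀‖ :=
    calc (y - y₀) v ≤ ‖y - y₀‖ * ‖v‖ := (le_abs_self _).trans ((y - y₀).le_opNorm v)
      _ ≤ L * ‖y - y₀‖ := by rw [mul_comm]; gcongr
  rw [hgv] at hφy
  simp only [sub_apply] at hslope
  change _ < g x + y v + c at hφy
  linarith

theorem forall_ne_top_and_abs_sub_le_of_le_add_mul_norm {V : Type*} [SeminormedAddCommGroup V]
    {F : V → EReal} {L : ℝ} (hbot : ∀ y, F y ≠ ⊥) {y₀ : V} (hy₀ : F y₀ ≠ ⊤)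
    (hF : ∀ y z, F z ≠ ⊤ → F y ≤ ((F z).toReal + L * ‖y - z‖ : ℝ)) :
    (∀ y, F y ≠ ⊤ ∧ F y ≠ ⊥) ∧ ∀ y z, |(F y).toReal - (F z).toReal| ≤ L * ‖y - z‖ := by
  have htop : ∀ y, F y ≠ ⊤ := fun y => ne_top_of_le_ne_top (EReal.coe_ne_top _) (hF y y₀ hy₀)
  have hle : ∀ y z, (F y).toReal ≤ (F z).toReal + L * ‖y - z‖ := fun y z => by
    have := hF y z (htop z)
    rwa [← EReal.coe_toReal (htop y) (hbot y), EReal.coe_le_coe_iff] at this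
  refine ⟨fun y => ⟨htop y, hbot y⟩, fun y z => abs_sub_le_iff.2 ⟨?_, ?_⟩⟩
  · linarith [hle y z]
  · rw [norm_sub_rev]; linarith [hle z y]

end WeakDualProduct

section Fitzpatrick

variable {X : Type*} [NormedAddCommGroup X] [NormedSpace ℝ X] {T : Set (X × StrongDual ℝ X)}

def fitzpatrickTerm (p z : X × StrongDual ℝ X) : ℝ := p.2 z.1 + z.2 p.1 - p.2 p.1

noncomputable def fitzpatrickFunction (T : Set (X × StrongDual ℝ X))
    (z : X × StrongDual ℝ X) : EReal :=
  ⨆ p : T, (fitzpatrickTerm p z : EReal)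

theorem fitzpatrickTerm_le_fitzpatrickFunction {p : X × StrongDual ℝ X} (hp : p ∈ T)
    (z : X × StrongDual ℝ X) : (fitzpatrickTerm p z : EReal) ≤ fitzpatrickFunction T z :=
  le_iSup (fun q : T => (fitzpatrickTerm q z : EReal)) ⟨p, hp⟩

theorem fitzpatrickTerm_eq (p z : X × StrongDual ℝ X) :
    fitzpatrickTerm p z = z.2 z.1 - (z.2 - p.2) (z.1 - p.1) := by
  simp only [fitzpatrickTerm, sub_apply, map_sub]
  ring

theorem fitzpatrickTerm_add_smul (p x y : X × StrongDual ℝ X) {a b : ℝ} (hab : a + b = 1) :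
    fitzpatrickTerm p (a • x + b • y) = a * fitzpatrickTerm p x + b * fitzpatrickTerm p y := by
  simp only [fitzpatrickTerm, Prod.fst_add, Prod.snd_add, Prod.smul_fst, Prod.smul_snd, map_add,
    map_smul, add_apply, smul_apply, smul_eq_mul]
  linear_combination p.2 p.1 * hab

theorem fitzpatrickFunction_ne_top_of_le {z : X × StrongDual ℝ X} {C : ℝ}
    (hC : ∀ p ∈ T, fitzpatrickTerm p z ≤ C) : fitzpatrickFunction T z ≠ ⊤ :=
  ne_top_of_le_ne_top (EReal.coe_ne_top C) <| iSup_le fun p => EReal.coe_le_coe_iff.2 (hC p p.2)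

theorem MonotoneSet.fitzpatrickFunction_le_pairE (hT : MonotoneSet X T)
    {z : X × StrongDual ℝ X} (hz : z ∈ T) : fitzpatrickFunction T z ≤ pairE X z :=
  iSup_le fun p => EReal.coe_le_coe_iff.2 <| by
    rw [fitzpatrickTerm_eq]; linarith [hT z hz p p.2]

theorem MaxMonotone.mem_of_forall (hT : MaxMonotone X T)
    {z : X × StrongDual ℝ X} (hz : ∀ q ∈ T, 0 ≤ (z.2 - q.2) (z.1 - q.1)) : z ∈ T := by
  have hmono : MonotoneSet X (insert z T) := by
    intro p hp q hq
    rcases Set.mem_insert_iff.1 hp with hpz | hp <;>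
      rcases Set.mem_insert_iff.1 hq with hqz | hq
    · simp [hpz, hqz]
    · exact hpz ▸ hz q hq
    · have hswap : (p.2 - z.2) (p.1 - z.1) = (z.2 - p.2) (z.1 - p.1) := by
        simp only [sub_apply, map_sub]; ring
      exact hqz ▸ hswap ▸ hz p hp
    · exact hT.1 p hp q hq
  exact hT.2 _ hmono (Set.subset_insert z T) ▸ Set.mem_insert z T

theorem MaxMonotone.pairE_le_fitzpatrickFunction (hT : MaxMonotone X T)
    (z : X × StrongDual ℝ X) : pairE X z ≤ fitzpatrickFunction T z := by
  by_contra! hlt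
  have hz : z ∈ T := hT.mem_of_forall fun q hq => by
    have := (fitzpatrickTerm_le_fitzpatrickFunction hq z).trans_lt hlt
    rw [pairE, EReal.coe_lt_coe_iff, fitzpatrickTerm_eq] at this
    linarith
  have hself : fitzpatrickTerm z z = z.2 z.1 := by simp [fitzpatrickTerm_eq]
  refine hlt.not_ge ?_
  rw [pairE, ← hself]
  exact fitzpatrickTerm_le_fitzpatrickFunction hz z

theorem MaxMonotone.fitzpatrickFunction_mem_fitzFamily (hT : MaxMonotone X T) :
    fitzpatrickFunction T ∈ FitzFamily X T :=
  ⟨erConvex_iSup _ fun p x y _ _ hab => fitzpatrickTerm_add_smul p x y hab,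
    lowerSemicontinuous_iSup fun p => (continuous_coe_real_ereal.comp <| by
      unfold fitzpatrickTerm; fun_prop).lowerSemicontinuous,
    hT.pairE_le_fitzpatrickFunction,
    fun _ hz =>
      le_antisymm (hT.1.fitzpatrickFunction_le_pairE hz) (hT.pairE_le_fitzpatrickFunction _)⟩

theorem lscSW_fitzpatrickFunction (T : Set (X × StrongDual ℝ X)) :
    lscSW X (fitzpatrickFunction T) :=
  lowerSemicontinuous_iSup fun p => (continuous_coe_real_ereal.comp <| by
    unfold fitzpatrickTerm
    exact ((p.1.2.continuous.comp continuous_fst).add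
      ((WeakDual.eval_continuous p.1.1).comp continuous_snd)).sub
        continuous_const).lowerSemicontinuous

end Fitzpatrick

section BoundedDomain

variable {X : Type*} [NormedAddCommGroup X] [NormedSpace ℝ X] {T : Set (X × StrongDual ℝ X)}
  {h : X × StrongDual ℝ X → EReal} {L : ℝ}

theorem isBounded_fst_image_iff {E F : Type*} [SeminormedAddCommGroup E] {S : Set (E × F)} :
    Bornology.IsBounded (Prod.fst '' S) ↔ ∃ L, 0 ≤ L ∧ ∀ p ∈ S, ‖p.1‖ ≤ L := by
  simp only [isBounded_iff_forall_norm_le, Set.forall_mem_image]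
  exact ⟨fun ⟨C, hC⟩ => ⟨max C 0, le_max_right _ _, fun p hp => (hC hp).trans (le_max_left _ _)⟩,
    fun ⟨L, _, hL⟩ => ⟨L, hL⟩⟩

theorem fst_image_subset_fst_image_edom (hh : h ∈ FitzFamily X T) :
    Prod.fst '' T ⊆ Prod.fst '' edom h :=
  Set.image_mono fun z hz => by
    change h z < ⊤
    rw [hh.2.2.2 z hz]
    exact EReal.coe_lt_top _

theorem MaxMonotone.norm_le_of_fitzpatrickFunction_ne_top (hT : MaxMonotone X T)
    (hD : ∀ p ∈ T, ‖p.1‖ ≤ L) {z : X × StrongDual ℝ X} (hz : fitzpatrickFunction T z ≠ ⊤) :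
    ‖z.1‖ ≤ L := by
  by_contra! hgt
  obtain ⟨ζ, hζ, hζz⟩ := exists_dual_vector'' ℝ z.1
  replace hζz : ζ z.1 = ‖z.1‖ := by exact_mod_cast hζz
  set C := (fitzpatrickFunction T z).toReal
  have hC : ∀ p ∈ T, fitzpatrickTerm p z ≤ C := fun p hp => by
    exact_mod_cast (fitzpatrickTerm_le_fitzpatrickFunction hp z).trans (EReal.le_coe_toReal hz)
  set k := max 0 ((C - z.2 z.1) / (‖z.1‖ - L))
  have hk : C - z.2 z.1 ≤ k * (‖z.1‖ - L) :=
    (div_le_iff₀ (sub_pos.2 hgt)).1 (le_max_right _ _)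
  have hmem : (z.1, z.2 + k • ζ) ∈ T := hT.mem_of_forall fun q hq => by
    have hζq : ζ q.1 ≤ L :=
      (le_abs_self _).trans <| (ζ.le_opNorm q.1).trans <|
        (mul_le_of_le_one_left (norm_nonneg _) hζ).trans (hD q hq)
    have hexp : (z.2 + k • ζ - q.2) (z.1 - q.1)
        = (z.2 - q.2) (z.1 - q.1) + k * (ζ z.1 - ζ q.1) := by
      simp only [sub_apply, add_apply, smul_apply, smul_eq_mul, map_sub]
      ring
    have hq := hC q hq
    rw [fitzpatrickTerm_eq] at hq
    rw [hexp, hζz]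
    nlinarith [mul_le_mul_of_nonneg_left (show ‖z.1‖ - L ≤ ‖z.1‖ - ζ q.1 by linarith)
      (le_max_left 0 _ : 0 ≤ k)]
  exact hgt.not_ge (hD (z.1, z.2 + k • ζ) hmem)

/-- Midpoint convexity between `p ∈ T` and `z`. -/
theorem fitzpatrickTerm_le_of_mem_fitzFamily (hh : h ∈ FitzFamily X T)
    {z : X × StrongDual ℝ X} (hz : h z ≠ ⊤) {p : X × StrongDual ℝ X} (hp : p ∈ T) :
    fitzpatrickTerm p z ≤ 2 * (h z).toReal - z.2 z.1 := by
  obtain ⟨hconv, -, hpair, heqT⟩ := hh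
  have hmid := (hpair _).trans (hconv p z (1 / 2) (1 / 2) (by norm_num) (by norm_num) (by norm_num))
  rw [heqT p hp, ← EReal.coe_toReal hz (ne_bot_of_le_ne_bot (EReal.coe_ne_bot _) (hpair z)),
    pairE, pairE, ← EReal.coe_mul, ← EReal.coe_mul, ← EReal.coe_add, EReal.coe_le_coe_iff] at hmid
  simp only [Prod.fst_add, Prod.snd_add, Prod.smul_fst, Prod.smul_snd, map_add, map_smul,
    add_apply, smul_apply, smul_eq_mul] at hmid
  unfold fitzpatrickTerm
  linarith

theorem fitzpatrickFunction_ne_top_of_mem_fitzFamily (hh : h ∈ FitzFamily X T)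
    {z : X × StrongDual ℝ X} (hz : h z ≠ ⊤) : fitzpatrickFunction T z ≠ ⊤ :=
  fitzpatrickFunction_ne_top_of_le fun _ hp => fitzpatrickTerm_le_of_mem_fitzFamily hh hz hp

theorem fitzpatrickFunction_ne_top_of_minorant (hh : h ∈ FitzFamily X T) {g : StrongDual ℝ X}
    {v : X} {c : ℝ} (hmin : ∀ z, ((g z.1 + z.2 v + c : ℝ) : EReal) ≤ h z) :
    fitzpatrickFunction T (v, g) ≠ ⊤ :=
  fitzpatrickFunction_ne_top_of_le (C := -c) fun p hp => by
    have := hmin p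
    rw [hh.2.2.2 p hp, pairE, EReal.coe_le_coe_iff] at this
    unfold fitzpatrickTerm
    linarith

theorem MaxMonotone.norm_le_of_mem_fst_edom (hT : MaxMonotone X T) (hD : ∀ p ∈ T, ‖p.1‖ ≤ L)
    (hh : h ∈ FitzFamily X T) : ∀ x ∈ Prod.fst '' edom h, ‖x‖ ≤ L := by
  rintro _ ⟨z, hz, rfl⟩
  exact hT.norm_le_of_fitzpatrickFunction_ne_top hD
    (fitzpatrickFunction_ne_top_of_mem_fitzFamily hh hz.ne)

theorem MaxMonotone.lipschitz_of_mem_fst_edom (hT : MaxMonotone X T) (hD : ∀ p ∈ T, ‖p.1‖ ≤ L)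
    (hh : h ∈ FitzFamily X T) (hlsc : lscSW X h) {x : X} (hx : x ∈ Prod.fst '' edom h) :
    (∀ y : StrongDual ℝ X, h (x, y) ≠ ⊤ ∧ h (x, y) ≠ ⊥) ∧
      ∀ y z : StrongDual ℝ X, |(h (x, y)).toReal - (h (x, z)).toReal| ≤ L * ‖y - z‖ := by
  obtain ⟨⟨x, y₀⟩, hy₀, rfl⟩ := hx
  have hbot : ∀ z, h z ≠ ⊥ := fun z => ne_bot_of_le_ne_bot (EReal.coe_ne_bot _) (hh.2.2.1 z)
  refine forall_ne_top_and_abs_sub_le_of_le_add_mul_norm (fun _ => hbot _) hy₀.ne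
    fun y _ hz => apply_le_add_mul_norm_of_minorant_slopes_le hh.1 hlsc hbot ?_ hz y
  exact fun _ _ _ hmin =>
    hT.norm_le_of_fitzpatrickFunction_ne_top hD (fitzpatrickFunction_ne_top_of_minorant hh hmin)

theorem norm_le_of_lipschitz_at_mem (hh : h ∈ FitzFamily X T) (hL : 0 ≤ L)
    {p : X × StrongDual ℝ X} (hp : p ∈ T)
    (hslice : (∀ y : StrongDual ℝ X, h (p.1, y) ≠ ⊤ ∧ h (p.1, y) ≠ ⊥) ∧
      ∀ y z : StrongDual ℝ X, |(h (p.1, y)).toReal - (h (p.1, z)).toReal| ≤ L * ‖y - z‖) :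
    ‖p.1‖ ≤ L := by
  obtain ⟨ζ, hζ, hζx⟩ := exists_dual_vector'' ℝ p.1
  replace hζx : ζ p.1 = ‖p.1‖ := by exact_mod_cast hζx
  have hlip := (le_abs_self _).trans (hslice.2 (p.2 + ζ) p.2)
  have hp' : (h (p.1, p.2)).toReal = p.2 p.1 := by
    rw [hh.2.2.2 p hp, pairE, EReal.toReal_coe]
  have hpair : (p.2 + ζ) p.1 ≤ (h (p.1, p.2 + ζ)).toReal := by
    have := hh.2.2.1 (p.1, p.2 + ζ)
    rwa [pairE, ← EReal.coe_toReal (hslice.1 _).1 (hslice.1 _).2, EReal.coe_le_coe_iff] at this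
  rw [add_sub_cancel_left, hp'] at hlip
  rw [add_apply, hζx] at hpair
  nlinarith [mul_le_mul_of_nonneg_left hζ hL]

end BoundedDomain

theorem statement15_general (X : Type*) [NormedAddCommGroup X] [NormedSpace ℝ X]
    (T : Set (X × StrongDual ℝ X)) (hT : MaxMonotone X T) :
    List.TFAE [
      Bornology.IsBounded (Prod.fst '' T),
      ∀ h ∈ FitzFamily X T, Bornology.IsBounded (Prod.fst '' edom h),
      ∃ h ∈ FitzFamily X T, Bornology.IsBounded (Prod.fst '' edom h),
      ∃ L : ℝ, 0 ≤ L ∧ ∀ h ∈ FitzFamily X T, lscSW X h → ∀ x ∈ Prod.fst '' edom h,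
        (∀ y : StrongDual ℝ X, h (x, y) ≠ ⊤ ∧ h (x, y) ≠ ⊥) ∧
        ∀ y z : StrongDual ℝ X, |(h (x, y)).toReal - (h (x, z)).toReal| ≤ L * ‖y - z‖,
      ∃ h ∈ FitzFamily X T, lscSW X h ∧ ∃ L : ℝ, 0 ≤ L ∧ ∀ x ∈ Prod.fst '' edom h,
        (∀ y : StrongDual ℝ X, h (x, y) ≠ ⊤ ∧ h (x, y) ≠ ⊥) ∧
        ∀ y z : StrongDual ℝ X, |(h (x, y)).toReal - (h (x, z)).toReal| ≤ L * ‖y - z‖ ] := by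
  have hφ := hT.fitzpatrickFunction_mem_fitzFamily
  tfae_have 1 → 2 := fun hb h hh => by
    obtain ⟨L, -, hD⟩ := isBounded_fst_image_iff.1 hb
    exact isBounded_iff_forall_norm_le.2 ⟨L, hT.norm_le_of_mem_fst_edom hD hh⟩
  tfae_have 2 → 3 := fun h2 => ⟨_, hφ, h2 _ hφ⟩
  tfae_have 3 → 1 := fun ⟨_, hh, hb⟩ => hb.subset (fst_image_subset_fst_image_edom hh)
  tfae_have 1 → 4 := fun hb => by
    obtain ⟨L, hL, hD⟩ := isBounded_fst_image_iff.1 hb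
    exact ⟨L, hL, fun _ hh hlsc _ hx => hT.lipschitz_of_mem_fst_edom hD hh hlsc hx⟩
  tfae_have 4 → 5 := fun ⟨L, hL, h4⟩ =>
    ⟨_, hφ, lscSW_fitzpatrickFunction T, L, hL, h4 _ hφ (lscSW_fitzpatrickFunction T)⟩
  tfae_have 5 → 1 := fun ⟨_, hh, _, L, hL, h5⟩ => isBounded_fst_image_iff.2
    ⟨L, hL, fun p hp => norm_le_of_lipschitz_at_mem hh hL hp
      (h5 p.1 (fst_image_subset_fst_image_edom hh ⟨p, hp, rfl⟩))⟩
  tfae_finish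

theorem statement15 (X : Type*) [NormedAddCommGroup X] [NormedSpace ℝ X] [CompleteSpace X]
    (T : Set (X × StrongDual ℝ X)) (hT : MaxMonotone X T) :
    List.TFAE [
      Bornology.IsBounded (Prod.fst '' T),
      ∀ h ∈ FitzFamily X T, Bornology.IsBounded (Prod.fst '' edom h),
      ∃ h ∈ FitzFamily X T, Bornology.IsBounded (Prod.fst '' edom h),
      ∃ L : ℝ, 0 ≤ L ∧ ∀ h ∈ FitzFamily X T, lscSW X h → ∀ x ∈ Prod.fst '' edom h,
        (∀ y : StrongDual ℝ X, h (x, y) ≠ ⊤ ∧ h (x, y) ≠ ⊥) ∧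
        ∀ y z : StrongDual ℝ X, |(h (x, y)).toReal - (h (x, z)).toReal| ≤ L * ‖y - z‖,
      ∃ h ∈ FitzFamily X T, lscSW X h ∧ ∃ L : ℝ, 0 ≤ L ∧ ∀ x ∈ Prod.fst '' edom h,
        (∀ y : StrongDual ℝ X, h (x, y) ≠ ⊤ ∧ h (x, y) ≠ ⊥) ∧
        ∀ y z : StrongDual ℝ X, |(h (x, y)).toReal - (h (x, z)).toReal| ≤ L * ‖y - z‖ ] :=
  statement15_general X T hT
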